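/- Define, for real symmetric matrices L_a, L_b (sizes n_a ≤ n_b) and fixed t > 0, D_reg(L_a, L_b | t) = inf over α > 0 and over P with P^T P = I of [ ||P e^{(t/α) L_a} − e^{tα L_b} P||_F + ||e^{(t/α) L_a} − e^{t L_a}||_F + ||e^{t L_b} P − e^{tα L_b} P||_F ]. Then for L₁, L₂, L₃ of sizes n₁ ≤ n₂ ≤ n₃ and fixed t: D_reg(L₁, L₃ | t) ≤ D_reg(L₁, L₂ | t) + D_reg(L₂, L₃ | t). -/

import Mathlib

/-!
Taking `α = 1` in the problem for `(L₁, L₃)` makes both regularization terms vanish, so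
`D_reg(L₁, L₃)` is at most the intertwining defect `‖P e^{tL₁} - e^{tL₃} P‖_F` of any
column-orthonormal `P`. For a product `P = Q P'` this defect is at most the sum of the defects of
`P'` and `Q`, because multiplying by a column-orthonormal matrix on the left preserves the
Frobenius norm and on the right does not increase it. Finally, inserting `e^{(t/α)L}` and
`e^{tαL}` bounds the defect of `P` by the regularized objective at any `α`.
-/

open Matrix NormedSpace

/-- Frobenius norm of a real matrix. -/
noncomputable def frob {a b : ℕ} (A : Matrix (Fin a) (Fin b) ℝ) : ℝ :=
  Real.sqrt (Matrix.trace (Aᵀ * A))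

/-- The regularized graph diffusion distance at fixed time `t`. -/
noncomputable def Dreg (t : ℝ) {a b : ℕ} (La : Matrix (Fin a) (Fin a) ℝ)
    (Lb : Matrix (Fin b) (Fin b) ℝ) : ℝ :=
  sInf {x : ℝ | ∃ α : ℝ, 0 < α ∧ ∃ P : Matrix (Fin b) (Fin a) ℝ, Pᵀ * P = 1 ∧
    x = frob (P * exp ((t / α) • La) - exp ((t * α) • Lb) * P) +
        frob (exp ((t / α) • La) - exp (t • La)) +
        frob (exp (t • Lb) * P - exp ((t * α) • Lb) * P)}

noncomputable def dregObjective (t α : ℝ) {a b : ℕ} (La : Matrix (Fin a) (Fin a) ℝ)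
    (Lb : Matrix (Fin b) (Fin b) ℝ) (P : Matrix (Fin b) (Fin a) ℝ) : ℝ :=
  frob (P * exp ((t / α) • La) - exp ((t * α) • Lb) * P) +
    frob (exp ((t / α) • La) - exp (t • La)) +
    frob (exp (t • Lb) * P - exp ((t * α) • Lb) * P)

attribute [local instance] Matrix.frobeniusNormedAddCommGroup

namespace Matrix

theorem transpose_mul_self_mul_eq_one {l m n : Type*} [Fintype m] [Fintype n] [DecidableEq l]
    [DecidableEq n] {Q : Matrix m n ℝ} {P : Matrix n l ℝ} (hQ : Qᵀ * Q = 1)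
    (hP : Pᵀ * P = 1) : (Q * P)ᵀ * (Q * P) = 1 := by
  rw [transpose_mul, Matrix.mul_assoc, ← Matrix.mul_assoc Qᵀ, hQ, Matrix.one_mul, hP]

variable {l m n : Type*} [Fintype l] [Fintype m] [Fintype n]

theorem frobenius_norm_sq_eq_trace (A : Matrix m n ℝ) : ‖A‖ ^ 2 = trace (Aᵀ * A) := by
  rw [frobenius_norm_def, ← Real.sqrt_eq_rpow, Real.sq_sqrt (by positivity), Finset.sum_comm]
  simp [trace, mul_apply, sq]

theorem frobenius_norm_mul_eq_of_transpose_mul_self [DecidableEq n] {Q : Matrix m n ℝ}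
    (hQ : Qᵀ * Q = 1) (M : Matrix n l ℝ) : ‖Q * M‖ = ‖M‖ := by
  rw [← sq_eq_sq₀ (norm_nonneg _) (norm_nonneg _), frobenius_norm_sq_eq_trace,
    frobenius_norm_sq_eq_trace, transpose_mul, Matrix.mul_assoc, ← Matrix.mul_assoc Qᵀ, hQ,
    Matrix.one_mul]

theorem frobenius_norm_mul_le_of_transpose_mul_self [DecidableEq l] {P : Matrix n l ℝ}
    (hP : Pᵀ * P = 1) (M : Matrix m n ℝ) : ‖M * P‖ ≤ ‖M‖ := by
  -- `M` splits orthogonally into `M P Pᵀ` and `M - M P Pᵀ`, and `‖M P Pᵀ‖ = ‖M P‖`.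
  set X := M * P * Pᵀ
  have hX : ‖X‖ = ‖M * P‖ := by
    rw [← frobenius_norm_transpose X, transpose_mul, transpose_transpose,
      frobenius_norm_mul_eq_of_transpose_mul_self hP, frobenius_norm_transpose]
  have hMX : trace (Mᵀ * X) = ‖M * P‖ ^ 2 := by
    rw [frobenius_norm_sq_eq_trace, transpose_mul, Matrix.mul_assoc, trace_mul_comm Pᵀ]
    simp only [X, Matrix.mul_assoc]
  have hsplit : ‖M - X‖ ^ 2 = ‖M‖ ^ 2 - 2 * trace (Mᵀ * X) + ‖X‖ ^ 2 := by
    rw [frobenius_norm_sq_eq_trace, frobenius_norm_sq_eq_trace, frobenius_norm_sq_eq_trace,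
      transpose_sub, Matrix.sub_mul, Matrix.mul_sub, Matrix.mul_sub, trace_sub, trace_sub,
      trace_sub, ← trace_transpose (Xᵀ * M), transpose_mul, transpose_transpose]
    ring
  rw [hMX, hX] at hsplit
  have := sq_nonneg ‖M - X‖
  exact (sq_le_sq₀ (norm_nonneg _) (norm_nonneg _)).mp (by linarith)

theorem exists_transpose_mul_self_eq_one {a b : ℕ} (h : a ≤ b) :
    ∃ P : Matrix (Fin b) (Fin a) ℝ, Pᵀ * P = 1 := by
  refine ⟨(1 : Matrix (Fin b) (Fin b) ℝ).submatrix id (Fin.castLE h), ?_⟩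
  rw [transpose_submatrix, ← submatrix_mul _ _ _ _ _ Function.bijective_id, transpose_one,
    Matrix.one_mul, submatrix_one _ (Fin.castLE_injective h)]

theorem frobenius_norm_mul_sub_mul_le [DecidableEq n] {P : Matrix m n ℝ} (hP : Pᵀ * P = 1)
    (E A : Matrix n n ℝ) (F B : Matrix m m ℝ) :
    ‖P * E - F * P‖ ≤ ‖P * A - B * P‖ + ‖A - E‖ + ‖F * P - B * P‖ := by
  have hsplit : P * E - F * P = P * (E - A) + (P * A - B * P) + (B * P - F * P) := by
    simp only [Matrix.mul_sub]
    abel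
  calc ‖P * E - F * P‖ ≤ ‖P * (E - A)‖ + ‖P * A - B * P‖ + ‖B * P - F * P‖ :=
        hsplit ▸ norm_add₃_le
    _ = ‖P * A - B * P‖ + ‖A - E‖ + ‖F * P - B * P‖ := by
        rw [frobenius_norm_mul_eq_of_transpose_mul_self hP, norm_sub_rev A, norm_sub_rev (F * P)]
        ring

theorem frobenius_norm_mul_mul_sub_mul_mul_le [DecidableEq l] [DecidableEq n] {Q : Matrix m n ℝ}
    {P : Matrix n l ℝ} (hQ : Qᵀ * Q = 1) (hP : Pᵀ * P = 1) (E₁ : Matrix l l ℝ)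
    (E₂ : Matrix n n ℝ) (E₃ : Matrix m m ℝ) :
    ‖Q * P * E₁ - E₃ * (Q * P)‖ ≤ ‖P * E₁ - E₂ * P‖ + ‖Q * E₂ - E₃ * Q‖ := by
  have hsplit : Q * P * E₁ - E₃ * (Q * P) = Q * (P * E₁ - E₂ * P) + (Q * E₂ - E₃ * Q) * P := by
    simp only [Matrix.mul_sub, Matrix.sub_mul, Matrix.mul_assoc]
    abel
  calc ‖Q * P * E₁ - E₃ * (Q * P)‖
      ≤ ‖Q * (P * E₁ - E₂ * P)‖ + ‖(Q * E₂ - E₃ * Q) * P‖ := hsplit ▸ norm_add_le _ _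
    _ ≤ ‖P * E₁ - E₂ * P‖ + ‖Q * E₂ - E₃ * Q‖ := by
        rw [frobenius_norm_mul_eq_of_transpose_mul_self hQ]
        gcongr
        exact frobenius_norm_mul_le_of_transpose_mul_self hP _

end Matrix

theorem frob_eq_norm {a b : ℕ} (A : Matrix (Fin a) (Fin b) ℝ) : frob A = ‖A‖ := by
  rw [frob, ← frobenius_norm_sq_eq_trace, Real.sqrt_sq (norm_nonneg A)]

section Dreg

variable (t : ℝ) {a b : ℕ} (La : Matrix (Fin a) (Fin a) ℝ) (Lb : Matrix (Fin b) (Fin b) ℝ)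

theorem norm_mul_exp_sub_exp_mul_le_dregObjective {P : Matrix (Fin b) (Fin a) ℝ}
    (hP : Pᵀ * P = 1) (α : ℝ) :
    ‖P * exp (t • La) - exp (t • Lb) * P‖ ≤ dregObjective t α La Lb P := by
  simp only [dregObjective, frob_eq_norm]
  exact frobenius_norm_mul_sub_mul_le hP _ _ _ _

theorem dregObjective_one (P : Matrix (Fin b) (Fin a) ℝ) :
    dregObjective t 1 La Lb P = ‖P * exp (t • La) - exp (t • Lb) * P‖ := by
  simp [dregObjective, frob_eq_norm]

theorem Dreg_le_dregObjective {α : ℝ} (hα : 0 < α) {P : Matrix (Fin b) (Fin a) ℝ}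
    (hP : Pᵀ * P = 1) : Dreg t La Lb ≤ dregObjective t α La Lb P := by
  refine csInf_le ⟨0, ?_⟩ ⟨α, hα, P, hP, rfl⟩
  rintro _ ⟨β, -, Q, -, rfl⟩
  simp only [frob_eq_norm]
  positivity

theorem le_Dreg (h : a ≤ b) {c : ℝ}
    (hc : ∀ α, 0 < α → ∀ P : Matrix (Fin b) (Fin a) ℝ, Pᵀ * P = 1 →
      c ≤ dregObjective t α La Lb P) :
    c ≤ Dreg t La Lb := by
  obtain ⟨P, hP⟩ := exists_transpose_mul_self_eq_one h
  refine le_csInf ⟨_, 1, one_pos, P, hP, rfl⟩ ?_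
  rintro _ ⟨α, hα, Q, hQ, rfl⟩
  exact hc α hα Q hQ

end Dreg

theorem Dreg_triangle_general {n₁ n₂ n₃ : ℕ} (h12 : n₁ ≤ n₂) (h23 : n₂ ≤ n₃)
    (t : ℝ)
    (L₁ : Matrix (Fin n₁) (Fin n₁) ℝ) (L₂ : Matrix (Fin n₂) (Fin n₂) ℝ)
    (L₃ : Matrix (Fin n₃) (Fin n₃) ℝ) :
    Dreg t L₁ L₃ ≤ Dreg t L₁ L₂ + Dreg t L₂ L₃ := by
  refine sub_le_iff_le_add.mp (le_Dreg t L₁ L₂ h12 fun α _ P hP => ?_)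
  refine sub_le_comm.mp (le_Dreg t L₂ L₃ h23 fun β _ Q hQ => sub_le_iff_le_add'.mpr ?_)
  calc Dreg t L₁ L₃ ≤ dregObjective t 1 L₁ L₃ (Q * P) :=
        Dreg_le_dregObjective t L₁ L₃ one_pos (transpose_mul_self_mul_eq_one hQ hP)
    _ = ‖Q * P * exp (t • L₁) - exp (t • L₃) * (Q * P)‖ := dregObjective_one t L₁ L₃ _
    _ ≤ ‖P * exp (t • L₁) - exp (t • L₂) * P‖ + ‖Q * exp (t • L₂) - exp (t • L₃) * Q‖ :=
        frobenius_norm_mul_mul_sub_mul_mul_le hQ hP _ _ _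
    _ ≤ dregObjective t α L₁ L₂ P + dregObjective t β L₂ L₃ Q :=
        add_le_add (norm_mul_exp_sub_exp_mul_le_dregObjective t L₁ L₂ hP α)
          (norm_mul_exp_sub_exp_mul_le_dregObjective t L₂ L₃ hQ β)

theorem Dreg_triangle {n₁ n₂ n₃ : ℕ} (h12 : n₁ ≤ n₂) (h23 : n₂ ≤ n₃)
    (t : ℝ) (ht : 0 < t)
    (L₁ : Matrix (Fin n₁) (Fin n₁) ℝ) (L₂ : Matrix (Fin n₂) (Fin n₂) ℝ)
    (L₃ : Matrix (Fin n₃) (Fin n₃) ℝ)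
    (h₁ : L₁.IsSymm) (h₂ : L₂.IsSymm) (h₃ : L₃.IsSymm) :
    Dreg t L₁ L₃ ≤ Dreg t L₁ L₂ + Dreg t L₂ L₃ :=
  Dreg_triangle_general h12 h23 t L₁ L₂ L₃
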